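/- arXiv:0907.3950 — 5 statements merged into one kernel-verified Lean document; each statement's English description precedes it below -/
import Mathlib

section
/- Let λ be a partition contained in an n × m rectangle (so λ has at most n parts, each at most m), and let μ be its complement in that rectangle, i.e. μ_i = m − λ_{n+1−i} for i = 1,...,n. Then the multiset union of the n numbers λ_i + (n − i) (for i = 1,...,n) and the m numbers μ'_j + (m − j) (for j = 1,...,m) equals {0, 1, 2, ..., n+m−1}. -/
/-- Let `λ` be a partition contained in an `n × m` rectangle and let `μ` be its complement
in the rectangle, `μ_i = m - λ_{n+1-i}`.  Then the multiset union of the `n` numbers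
`λ_i + (n - i)` and the `m` numbers `μ'_j + (m - j)` (where `μ'` is the conjugate of `μ`)
is `{0, 1, ..., n + m - 1}`; i.e. `(λ + δ_n) ∪ (μ' + δ_m) = δ_{n+m}`. -/
theorem staircase_complement (n m : ℕ) (lam mu : Fin n → ℕ)
    (hA : ∀ i j : Fin n, i ≤ j → lam j ≤ lam i)
    (hle : ∀ i, lam i ≤ m)
    (hmu : ∀ i : Fin n, mu i = m - lam i.rev) :
    (Finset.univ.val.map fun i : Fin n => lam i + (n - 1 - i.val)) +
      (Finset.univ.val.map fun j : Fin m =>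
        (Finset.univ.filter fun i : Fin n => j.val + 1 ≤ mu i).card + (m - 1 - j.val)) =
    Multiset.range (n + m) := by
  classical
  set L : ℕ → ℕ := fun t => (Finset.univ.filter fun i : Fin n => t ≤ lam i).card with hLdef
  have hLn : ∀ t, L t ≤ n := fun t => by
    simpa using (Finset.card_filter_le Finset.univ fun i : Fin n => t ≤ lam i)
  have hLanti : ∀ t t', t ≤ t' → L t' ≤ L t := by
    intro t t' h
    apply Finset.card_le_card
    intro i hi
    simp only [Finset.mem_filter, Finset.mem_univ, true_and] at *
    exact le_trans h hi
  have hmu' : ∀ j : Fin m,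
      (Finset.univ.filter fun i : Fin n => j.val + 1 ≤ mu i).card = n - L (m - j.val) := by
    intro j
    have h1 : (Finset.univ.filter fun i : Fin n => j.val + 1 ≤ mu i)
        = (Finset.univ.filter fun i : Fin n => ¬ (m - j.val ≤ lam i.rev)) := by
      apply Finset.filter_congr
      intro i _
      have h2 := hle i.rev
      have h3 := j.isLt
      rw [hmu i]
      omega
    rw [h1]
    have h2 : (Finset.univ.filter fun i : Fin n => ¬ (m - j.val ≤ lam i.rev)).card
        = (Finset.univ.filter fun i : Fin n => ¬ (m - j.val ≤ lam i)).card := by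
      apply Finset.card_equiv (Fin.revPerm)
      intro i
      simp [Fin.revPerm]
    rw [h2]
    have h3 := Finset.card_filter_add_card_filter_not
      (s := (Finset.univ : Finset (Fin n))) (p := fun i => m - j.val ≤ lam i)
    simp only [Finset.card_univ, Fintype.card_fin] at h3
    have h4 := hLn (m - j.val)
    have h5 : L (m - j.val) = (Finset.univ.filter fun i : Fin n => m - j.val ≤ lam i).card := rfl
    omega
  have key : ∀ (i : Fin n) (t : ℕ), 1 ≤ t → lam i + L t ≠ t + i.val := by
    intro i t ht heq
    rcases le_or_gt t (lam i) with h | h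
    · have hsub : Finset.Iic i ⊆ Finset.univ.filter fun i' : Fin n => t ≤ lam i' := by
        intro i' hi'
        simp only [Finset.mem_Iic] at hi'
        simp only [Finset.mem_filter, Finset.mem_univ, true_and]
        exact le_trans h (hA i' i hi')
      have hc := Finset.card_le_card hsub
      rw [Fin.card_Iic] at hc
      have h5 : L t = (Finset.univ.filter fun i' : Fin n => t ≤ lam i').card := rfl
      omega
    · have hsub : (Finset.univ.filter fun i' : Fin n => t ≤ lam i') ⊆ Finset.Iio i := by
        intro i' hi'
        simp only [Finset.mem_filter, Finset.mem_univ, true_and] at hi'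
        simp only [Finset.mem_Iio]
        by_contra hcon
        push_neg at hcon
        have := hA i i' hcon
        omega
      have hc := Finset.card_le_card hsub
      rw [Fin.card_Iio] at hc
      have h5 : L t = (Finset.univ.filter fun i' : Fin n => t ≤ lam i').card := rfl
      omega
  have hmap : (Finset.univ.val.map fun j : Fin m =>
        (Finset.univ.filter fun i : Fin n => j.val + 1 ≤ mu i).card + (m - 1 - j.val))
      = Finset.univ.val.map (fun j : Fin m => n - L (m - j.val) + (m - 1 - j.val)) :=
    Multiset.map_congr rfl (fun j _ => by rw [hmu' j])
  rw [hmap]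
  set f : Fin n → ℕ := fun i => lam i + (n - 1 - i.val) with hf
  set g : Fin m → ℕ := fun j => n - L (m - j.val) + (m - 1 - j.val) with hg
  set s : Multiset ℕ := Finset.univ.val.map f + Finset.univ.val.map g with hs
  have hnodup : s.Nodup := by
    rw [hs, Multiset.nodup_add]
    refine ⟨?_, ?_, ?_⟩
    · apply Multiset.Nodup.map_on _ Finset.univ.nodup
      intro i _ i' _ hfe
      rcases lt_trichotomy i.val i'.val with h | h | h
      · have := hA i i' (by exact_mod_cast h.le)
        have h1 := i'.isLt
        exfalso; simp only [hf] at hfe; omega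
      · exact Fin.ext h
      · have := hA i' i (by exact_mod_cast h.le)
        have h1 := i.isLt
        exfalso; simp only [hf] at hfe; omega
    · apply Multiset.Nodup.map_on _ Finset.univ.nodup
      intro j _ j' _ hge
      rcases lt_trichotomy j.val j'.val with h | h | h
      · have h1 := hLanti (m - j'.val) (m - j.val) (by omega)
        have h2 := hLn (m - j.val)
        have h3 := hLn (m - j'.val)
        have h4 := j'.isLt
        exfalso; simp only [hg] at hge; omega
      · exact Fin.ext h
      · have h1 := hLanti (m - j.val) (m - j'.val) (by omega)
        have h2 := hLn (m - j.val)
        have h3 := hLn (m - j'.val)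
        have h4 := j.isLt
        exfalso; simp only [hg] at hge; omega
    · rw [Multiset.disjoint_left]
      intro a ha hb
      simp only [Multiset.mem_map, Finset.mem_val, Finset.mem_univ, true_and] at ha hb
      obtain ⟨i, hi⟩ := ha
      obtain ⟨j, hj⟩ := hb
      have h1 := key i (m - j.val) (by have := j.isLt; omega)
      have h2 := hLn (m - j.val)
      have h3 := hle i
      have h4 := i.isLt
      have h5 := j.isLt
      simp only [hf] at hi
      simp only [hg] at hj
      omega
  have hsub : s ⊆ Multiset.range (n + m) := by
    intro a ha
    rw [Multiset.mem_range]
    rw [hs, Multiset.mem_add] at ha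
    rcases ha with ha | ha <;>
      simp only [Multiset.mem_map, Finset.mem_val, Finset.mem_univ, true_and] at ha
    · obtain ⟨i, hi⟩ := ha
      have := hle i
      have := i.isLt
      simp only [hf] at hi
      omega
    · obtain ⟨j, hj⟩ := ha
      have := hLn (m - j.val)
      have := j.isLt
      simp only [hg] at hj
      omega
  have hcard : s.card = n + m := by
    simp [hs]
  refine Multiset.eq_of_le_of_card_le ?_ ?_
  · exact (Multiset.le_iff_subset hnodup).mpr hsub
  · rw [Multiset.card_range, hcard]
end

section
/- Let f₁, f₂ be delta series over a field of characteristic zero, and define for n,k ≥ 1: α_{nk} = [y^n] f₂(y)^k, β_{nk} = [y^n] f₁(y)^k, γ_{nk} = [y^n] (f₁ ∘ f₂)(y)^k. Then γ_{nk} = ∑_i α_{ni} β_{ik} (Jabotinsky matrix composition: C = A·B). -/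
/-!
The hypothesis on `h` says exactly that `h = f₁ ∘ f₂` (`PowerSeries.subst`). Substitution of a
series without constant term is a ring homomorphism, so `h ^ k = f₁ ^ k ∘ f₂`, and the coefficients
of a substitution are the stated sums, finite because `f₂ ^ i` has order at least `i`.
-/

open PowerSeries Finset

namespace PowerSeries

variable {R : Type*} [CommRing R]

theorem coeff_pow_eq_zero_of_lt {f : R⟦X⟧} (hf : constantCoeff f = 0) {n i : ℕ} (h : n < i) :
    coeff n (f ^ i) = 0 :=
  coeff_of_lt_order n <| (Nat.cast_lt.mpr h).trans_le (le_order_pow_of_constantCoeff_eq_zero i hf)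

theorem coeff_subst_eq_sum_range {b : R⟦X⟧} (hb : constantCoeff b = 0) (f : R⟦X⟧) (n : ℕ) :
    coeff n (f.subst b) = ∑ j ∈ range (n + 1), coeff j f * coeff n (b ^ j) := by
  rw [coeff_subst' (HasSubst.of_constantCoeff_zero' hb)]
  refine finsum_eq_sum_of_support_subset _ fun j hj => mem_range.mpr ?_
  by_contra! hnj
  exact hj (by simp [coeff_pow_eq_zero_of_lt hb hnj])

end PowerSeries

theorem jabotinsky_composition_general {K : Type*} [Field K] (f₁ f₂ h : PowerSeries K)
    (hf₂0 : constantCoeff f₂ = 0)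
    (hh : ∀ n : ℕ, coeff n h =
      ∑ j ∈ Finset.range (n + 1), coeff j f₁ * coeff n (f₂ ^ j)) :
    ∀ n k : ℕ, 1 ≤ n → 1 ≤ k →
      coeff n (h ^ k) =
        ∑ i ∈ Finset.range (n + 1), coeff n (f₂ ^ i) * coeff i (f₁ ^ k) := by
  intro n k _ _
  have h_eq_subst : h = f₁.subst f₂ := by
    ext m
    rw [hh, coeff_subst_eq_sum_range hf₂0]
  rw [h_eq_subst, ← subst_pow (HasSubst.of_constantCoeff_zero' hf₂0),
    coeff_subst_eq_sum_range hf₂0]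
  exact sum_congr rfl fun i _ => mul_comm _ _

open PowerSeries in
/-- Jabotinsky matrix composition: if `f₁, f₂` are delta series over a field of
characteristic zero and `h = f₁ ∘ f₂` (composition expressed coefficientwise:
`[y^n]h = ∑_{j ≤ n} ([y^j]f₁) · [y^n](f₂^j)`), then with `α_{nk} = [y^n](f₂^k)`,
`β_{nk} = [y^n](f₁^k)`, `γ_{nk} = [y^n](h^k)` one has `γ_{nk} = ∑_i α_{ni} β_{ik}`
(the sum is finite since `α_{ni} = 0` for `i > n`). -/
theorem jabotinsky_composition {K : Type*} [Field K] [CharZero K] (f₁ f₂ h : PowerSeries K)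
    (hf₁0 : constantCoeff f₁ = 0) (hf₁1 : coeff 1 f₁ ≠ 0)
    (hf₂0 : constantCoeff f₂ = 0) (hf₂1 : coeff 1 f₂ ≠ 0)
    (hh : ∀ n : ℕ, coeff n h =
      ∑ j ∈ Finset.range (n + 1), coeff j f₁ * coeff n (f₂ ^ j)) :
    ∀ n k : ℕ, 1 ≤ n → 1 ≤ k →
      coeff n (h ^ k) =
        ∑ i ∈ Finset.range (n + 1), coeff n (f₂ ^ i) * coeff i (f₁ ^ k) :=
  jabotinsky_composition_general f₁ f₂ h hf₂0 hh
end

section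
/- The column-strict recurrence (dual Pieri / branching rule) for Schur polynomials: for a partition λ and a single extra variable z, s_λ(x_1,...,x_n, z) = ∑_{μ} s_μ(x_1,...,x_n) z^{|λ|−|μ|}, where the sum is over partitions μ ⊆ λ such that λ/μ is a horizontal strip. -/
/-!
Expanding `h_k(x, z) = ∑_r z^r h_{k-r}(x)` in every row of the Jacobi–Trudi matrix and using
multilinearity of the determinant, `s_λ(x, z)` becomes `∑_μ z^{|λ|-|μ|} det(h_{μ_i - i + j}(x))`
over integer vectors `μ` with `i + 1 - N ≤ μ_i ≤ λ_i`. Swapping rows `i` and `i + 1` exchanges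
`μ_i - i` and `μ_{i+1} - (i + 1)`, so it flips the sign and keeps the weight; doing this at the
first `i` with `μ_i < λ_{i+1}` is a sign-reversing involution on the vectors that do not interlace
`λ`. What survives are the `μ` with `λ_1 ≥ μ_1 ≥ λ_2 ≥ μ_2 ≥ …`, i.e. the horizontal strips.
-/

open MvPolynomial

/-- The complete homogeneous symmetric polynomial with integer index: `0` for negative
index, `h_k` for `k ≥ 0`. -/
noncomputable def hInt (nv : ℕ) (k : ℤ) : MvPolynomial (Fin nv) ℚ :=
  if 0 ≤ k then hsymm (Fin nv) ℚ k.toNat else 0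

/-- The Schur polynomial in `nv` variables of a partition given by its first `N` parts
`lam : Fin N → ℕ`, defined by the Jacobi–Trudi determinant
`s_λ = det(h_{λ_i + j - i})_{i,j < N}`. -/
noncomputable def schur (nv N : ℕ) (lam : Fin N → ℕ) : MvPolynomial (Fin nv) ℚ :=
  Matrix.det (Matrix.of fun i j : Fin N => hInt nv ((lam i : ℤ) + (j : ℤ) - (i : ℤ)))

theorem hsymm_option_succ (σ R : Type*) [Fintype σ] [DecidableEq σ] [CommSemiring R] (k : ℕ) :
    hsymm (Option σ) R (k + 1) =
      X none * hsymm (Option σ) R k + rename some (hsymm σ R (k + 1)) := by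
  rw [hsymm, ← Equiv.sum_comp (symOptionSuccEquiv (α := σ) (n := k)).symm,
    Fintype.sum_sum_type, hsymm, hsymm, Finset.mul_sum, map_sum]
  congr 1
  · refine Finset.sum_congr rfl fun s _ => ?_
    show ((Sym.cons none s).1.map X).prod = _
    simp [Sym.cons]
  · refine Finset.sum_congr rfl fun s _ => ?_
    show ((s.map Function.Embedding.some).1.map X).prod = _
    simp [Sym.map, Multiset.map_map, ← Multiset.prod_hom']

theorem hsymm_fin_succ (R : Type*) [CommSemiring R] (n k : ℕ) :
    hsymm (Fin (n + 1)) R (k + 1) =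
      X (Fin.last n) * hsymm (Fin (n + 1)) R k + rename Fin.castSucc (hsymm (Fin n) R (k + 1)) := by
  have h := congrArg (rename finSuccEquivLast.symm) (hsymm_option_succ (Fin n) R k)
  have hsome : (finSuccEquivLast (n := n)).symm ∘ some = Fin.castSucc := by ext; simp
  rwa [rename_hsymm, map_add, map_mul, rename_X, rename_hsymm, rename_rename, hsome,
    finSuccEquivLast_symm_none] at h

theorem hInt_succ_add_one (n : ℕ) (k : ℤ) :
    hInt (n + 1) (k + 1) =
      X (Fin.last n) * hInt (n + 1) k + rename Fin.castSucc (hInt n (k + 1)) := by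
  rcases lt_trichotomy k (-1) with hk | rfl | hk
  · simp [hInt, show ¬ (0 ≤ k + 1) by omega, show ¬ (0 ≤ k) by omega]
  · simp [hInt]
  · obtain ⟨m, rfl⟩ : ∃ m : ℕ, k = m := ⟨k.toNat, by omega⟩
    simp only [hInt, if_pos (by omega : (0 : ℤ) ≤ m), if_pos (by omega : (0 : ℤ) ≤ m + 1)]
    exact_mod_cast hsymm_fin_succ ℚ n m

theorem hInt_succ_add_eq_sum (n : ℕ) {c L : ℤ} (hL : L + c ≤ 0) (k : ℤ) :
    hInt (n + 1) (k + c) =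
      ∑ e ∈ Finset.Icc L k,
        X (Fin.last n) ^ (k - e).toNat * rename Fin.castSucc (hInt n (e + c)) := by
  rcases lt_or_ge k (L - 1) with hk | hk
  · simp [hInt, Finset.Icc_eq_empty_of_lt (show k < L by omega), show ¬ 0 ≤ k + c by omega]
  induction k, hk using Int.leInduction with
  | base => simp [hInt, show ¬ 0 ≤ L - 1 + c by omega]
  | succ k hk ih =>
    rw [← Finset.insert_Icc_right_eq_Icc_add_one (by omega), Finset.sum_insert (by simp),
      show k + 1 + c = (k + c) + 1 by ring, hInt_succ_add_one, ih, Finset.mul_sum, sub_self,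
      Int.toNat_zero, pow_zero, one_mul, add_comm (Finset.sum _ _)]
    congr 1
    refine Finset.sum_congr rfl fun e he => ?_
    rw [← mul_assoc, ← pow_succ', show (k + 1 - e).toNat = (k - e).toNat + 1 by
      have := (Finset.mem_Icc.1 he).2; omega]

/-- In the coordinates `d i = μ i - i` a swap of two rows of the Jacobi–Trudi matrix is a
transposition of `d`. -/
noncomputable def jacobiTrudi (nv N : ℕ) (d : Fin N → ℤ) : MvPolynomial (Fin nv) ℚ :=
  Matrix.det (Matrix.of fun i j : Fin N => hInt nv (d i + j))

theorem schur_eq_jacobiTrudi (nv N : ℕ) (lam : Fin N → ℕ) :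
    schur nv N lam = jacobiTrudi nv N (fun i => lam i - i) := by
  simp only [schur, jacobiTrudi, sub_add_eq_add_sub]

/-- `L + N ≤ 1` makes `Icc L (d i)` contain every `e` with `h_{e + j} ≠ 0` for some column `j`. -/
theorem jacobiTrudi_succ_eq_sum (n N : ℕ) (d : Fin N → ℤ) {L : ℤ} (hL : L + N ≤ 1) :
    jacobiTrudi (n + 1) N d =
      ∑ e ∈ Fintype.piFinset fun i => Finset.Icc L (d i),
        X (Fin.last n) ^ (∑ i, (d i - e i)).toNat * rename Fin.castSucc (jacobiTrudi n N e) := by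
  set z : MvPolynomial (Fin (n + 1)) ℚ := X (Fin.last n)
  set row : ℤ → Fin N → MvPolynomial (Fin (n + 1)) ℚ := fun e j =>
    rename Fin.castSucc (hInt n (e + j))
  have hrow : (Matrix.of fun i j : Fin N => hInt (n + 1) (d i + j)) =
      fun i => ∑ e ∈ Finset.Icc L (d i), z ^ (d i - e).toNat • row e := by
    funext i j
    simp only [Matrix.of_apply, Finset.sum_apply, Pi.smul_apply, smul_eq_mul, row]
    exact hInt_succ_add_eq_sum n (c := j) (L := L) (by omega) (d i)
  calc jacobiTrudi (n + 1) N d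
      = Matrix.detRowAlternating fun i =>
          ∑ e ∈ Finset.Icc L (d i), z ^ (d i - e).toNat • row e := by
        rw [jacobiTrudi, hrow]; rfl
    _ = ∑ e ∈ Fintype.piFinset fun i => Finset.Icc L (d i),
          Matrix.detRowAlternating fun i => z ^ (d i - e i).toNat • row (e i) :=
        Matrix.detRowAlternating.toMultilinearMap.map_sum_finset _ _
    _ = _ := by
      refine Finset.sum_congr rfl fun e he => ?_
      have hnonneg : ∀ i, 0 ≤ d i - e i := fun i =>
        sub_nonneg.2 (Finset.mem_Icc.1 (Fintype.mem_piFinset.1 he i)).2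
      have hexp : ∑ i, (d i - e i).toNat = (∑ i, (d i - e i)).toNat := by
        zify
        rw [Int.toNat_of_nonneg (Finset.sum_nonneg fun i _ => hnonneg i)]
        exact Finset.sum_congr rfl fun i _ => Int.toNat_of_nonneg (hnonneg i)
      change Matrix.det (Matrix.of fun i j => z ^ (d i - e i).toNat * row (e i) j) = _
      refine (Matrix.det_mul_column _ (Matrix.of fun i j => row (e i) j)).trans ?_
      rw [Finset.prod_pow_eq_pow_sum, hexp, jacobiTrudi, AlgHom.map_det]
      rfl

theorem jacobiTrudi_comp_swap (nv N : ℕ) (d : Fin N → ℤ) {i j : Fin N} (hij : i ≠ j) :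
    jacobiTrudi nv N (d ∘ Equiv.swap i j) = -jacobiTrudi nv N d := by
  have h := Matrix.det_permute (Equiv.swap i j) (Matrix.of fun i j : Fin N => hInt nv (d i + j))
  rw [Equiv.Perm.sign_swap hij] at h
  simp only [Units.val_neg, Units.val_one, Int.cast_neg, Int.cast_one, neg_one_mul] at h
  exact h

theorem jacobiTrudi_eq_zero_of_eq (nv N : ℕ) (d : Fin N → ℤ) {i j : Fin N} (hij : i ≠ j)
    (h : d i = d j) : jacobiTrudi nv N d = 0 :=
  Matrix.det_zero_of_row_eq hij (by ext k; simp [h])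

section FirstDescent

variable {m : ℕ} (ℓ : Fin (m + 1) → ℤ)

/-- With `d i = μ i - i` and `ℓ i = λ i - i`, the condition `d i ≤ ℓ (i + 1)` says
`μ i < λ (i + 1)`. -/
noncomputable def swapFirstDescent (d : Fin (m + 1) → ℤ) : Fin (m + 1) → ℤ :=
  if h : ∃ i : Fin m, d i.castSucc ≤ ℓ i.succ then
    d ∘ Equiv.swap (Fin.find _ h).castSucc (Fin.find _ h).succ
  else d

variable {ℓ}

theorem swapFirstDescent_of_exists {d : Fin (m + 1) → ℤ}
    (h : ∃ i : Fin m, d i.castSucc ≤ ℓ i.succ) :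
    swapFirstDescent ℓ d = d ∘ Equiv.swap (Fin.find _ h).castSucc (Fin.find _ h).succ :=
  dif_pos h

theorem swapFirstDescent_swapFirstDescent {d : Fin (m + 1) → ℤ} (hd : ∀ i, d i ≤ ℓ i) :
    swapFirstDescent ℓ (swapFirstDescent ℓ d) = d := by
  by_cases h : ∃ i : Fin m, d i.castSucc ≤ ℓ i.succ
  swap
  · simp only [swapFirstDescent, h, dite_false]
  set k := Fin.find _ h
  have hkd : d k.succ ≤ ℓ k.succ := hd _
  have h' : ∃ i : Fin m, (d ∘ Equiv.swap k.castSucc k.succ) i.castSucc ≤ ℓ i.succ :=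
    ⟨k, by simpa using hkd⟩
  have hfind : Fin.find _ h' = k := by
    rw [Fin.find_eq_iff]
    refine ⟨by simpa using hkd, fun j hj => ?_⟩
    rw [Function.comp_apply, Equiv.swap_apply_of_ne_of_ne]
    · exact Fin.find_min h hj
    · exact (Fin.castSucc_lt_castSucc_iff.2 hj).ne
    · exact ((Fin.castSucc_lt_castSucc_iff.2 hj).trans Fin.castSucc_lt_succ).ne
  rw [swapFirstDescent_of_exists h, swapFirstDescent_of_exists h', hfind]
  ext i
  simp [Equiv.swap_apply_self]

theorem swapFirstDescent_mem (hℓ : StrictAnti ℓ) {L : ℤ} {d : Fin (m + 1) → ℤ}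
    (hd : d ∈ (Fintype.piFinset fun i => Finset.Icc L (ℓ i)).filter
      fun d => ∃ i : Fin m, d i.castSucc ≤ ℓ i.succ) :
    swapFirstDescent ℓ d ∈ (Fintype.piFinset fun i => Finset.Icc L (ℓ i)).filter
      fun d => ∃ i : Fin m, d i.castSucc ≤ ℓ i.succ := by
  simp only [Finset.mem_filter, Fintype.mem_piFinset, Finset.mem_Icc] at hd ⊢
  obtain ⟨hbox, h⟩ := hd
  rw [swapFirstDescent_of_exists h]
  set k := Fin.find _ h
  have hk : d k.castSucc ≤ ℓ k.succ := Fin.find_spec h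
  have hℓk : ℓ k.succ < ℓ k.castSucc := hℓ Fin.castSucc_lt_succ
  refine ⟨fun i => ?_, k, by simpa using (hbox k.succ).2⟩
  rw [Function.comp_apply, Equiv.swap_apply_def]
  split_ifs with h1 h2
  · subst h1; exact ⟨(hbox _).1, (hbox _).2.trans hℓk.le⟩
  · subst h2; exact ⟨(hbox _).1, hk⟩
  · exact hbox i

theorem sum_filter_exists_descent_eq_zero {M : Type*} [AddCommGroup M]
    (F : (Fin (m + 1) → ℤ) → M)
    (hF_swap : ∀ d {i j}, i ≠ j → F (d ∘ Equiv.swap i j) = -F d)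
    (hF_eq : ∀ d {i j}, i ≠ j → d i = d j → F d = 0) (hℓ : StrictAnti ℓ) (L : ℤ) :
    ∑ d ∈ (Fintype.piFinset fun i => Finset.Icc L (ℓ i)).filter
        (fun d => ∃ i : Fin m, d i.castSucc ≤ ℓ i.succ), F d = 0 := by
  refine Finset.sum_involution (fun d _ => swapFirstDescent ℓ d) (fun d hd => ?_)
    (fun d hd hF => ?_) (fun d hd => swapFirstDescent_mem hℓ hd) (fun d hd => ?_)
  all_goals
    simp only [Finset.mem_filter, Fintype.mem_piFinset, Finset.mem_Icc] at hd
    obtain ⟨hbox, h⟩ := hd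
  · rw [swapFirstDescent_of_exists h, hF_swap _ Fin.castSucc_lt_succ.ne, add_neg_cancel]
  · rw [swapFirstDescent_of_exists h]
    intro hfix
    exact hF (hF_eq d Fin.castSucc_lt_succ.ne (by simpa using congrFun hfix (Fin.find _ h).succ))
  · exact swapFirstDescent_swapFirstDescent fun i => (hbox i).2

end FirstDescent

theorem Fin.forall_val_add_one_eq_iff {m : ℕ} {P : Fin (m + 1) → Fin (m + 1) → Prop} :
    (∀ i j : Fin (m + 1), (i : ℕ) + 1 = j → P i j) ↔ ∀ k : Fin m, P k.castSucc k.succ := by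
  refine ⟨fun h k => h _ _ (by simp), fun h i j hij => ?_⟩
  obtain ⟨k, rfl, rfl⟩ : ∃ k : Fin m, i = k.castSucc ∧ j = k.succ :=
    ⟨⟨i, by omega⟩, rfl, Fin.ext (by simp [← hij])⟩
  exact h k

theorem sum_filter_not_exists_descent_eq (n m : ℕ) (lam : Fin (m + 1) → ℕ) :
    ∑ d ∈ (Fintype.piFinset fun i => Finset.Icc (-m : ℤ) (lam i - i)).filter
        (fun d => ¬ ∃ k : Fin m, d k.castSucc ≤ (lam k.succ : ℤ) - k.succ),
      X (Fin.last n) ^ (∑ i, ((lam i - i : ℤ) - d i)).toNat *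
        rename Fin.castSucc (jacobiTrudi n (m + 1) d) =
    ∑ mu ∈ (Fintype.piFinset fun i => Finset.range (lam i + 1)).filter
        (fun mu => (∀ i, mu i ≤ lam i) ∧ ∀ i j : Fin (m + 1), (i : ℕ) + 1 = j → lam j ≤ mu i),
      rename Fin.castSucc (schur n (m + 1) mu) * X (Fin.last n) ^ (∑ i, lam i - ∑ i, mu i) := by
  symm
  refine Finset.sum_nbij' (fun mu i => (mu i : ℤ) - i) (fun d i => (d i + i).toNat)
    (fun mu hmu => ?_) (fun d hd => ?_) (fun mu _ => ?_) (fun d hd => ?_) (fun mu hmu => ?_)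
  all_goals simp only [Finset.mem_filter, Fintype.mem_piFinset, Finset.mem_Icc,
    Finset.mem_range, not_exists, not_le, Fin.forall_val_add_one_eq_iff, Fin.val_succ,
    Fin.val_castSucc, Nat.cast_add, Nat.cast_one] at *
  · obtain ⟨-, hle, hinter⟩ := hmu
    exact ⟨fun i => ⟨by have := i.isLt; omega, by have := hle i; omega⟩,
      fun k => by have := hinter k; omega⟩
  · obtain ⟨hbox, hdesc⟩ := hd
    exact ⟨fun i => by have := hbox i; omega, fun i => by have := hbox i; omega,
      fun k => by have := hdesc k; omega⟩
  · funext i; simp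
  · obtain ⟨hbox, hdesc⟩ := hd
    funext i
    rcases Fin.eq_castSucc_or_eq_last i with ⟨k, rfl⟩ | rfl
    · have := hdesc k; simp; omega
    · have := hbox (Fin.last m); simp; omega
  · rw [schur_eq_jacobiTrudi, mul_comm]
    congr 2
    have hle : ∑ i, mu i ≤ ∑ i, lam i := Finset.sum_le_sum fun i _ => hmu.2.1 i
    simp only [sub_sub_sub_cancel_right, Finset.sum_sub_distrib, ← Nat.cast_sum]
    omega

/-- Branching rule for Schur polynomials: for a partition `λ` (with at most `N` parts) and
an extra variable `z = x_{n+1}`,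
`s_λ(x_1, …, x_n, z) = ∑_μ s_μ(x_1, …, x_n) z^{|λ| - |μ|}`,
the sum over partitions `μ ⊆ λ` such that `λ/μ` is a horizontal strip
(`λ_1 ≥ μ_1 ≥ λ_2 ≥ μ_2 ≥ …`). -/
theorem schur_branching (n N : ℕ) (lam : Fin N → ℕ)
    (hlam : ∀ i j : Fin N, i ≤ j → lam j ≤ lam i) :
    schur (n + 1) N lam =
      ∑ mu ∈ (Fintype.piFinset fun i : Fin N => Finset.range (lam i + 1)).filter
          (fun mu => (∀ i : Fin N, mu i ≤ lam i) ∧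
            ∀ i j : Fin N, (i : ℕ) + 1 = (j : ℕ) → lam j ≤ mu i),
        rename Fin.castSucc (schur n N mu) *
          X (Fin.last n) ^ (∑ i, lam i - ∑ i, mu i) := by
  rcases N with _ | m
  · simp [schur]
  set ℓ : Fin (m + 1) → ℤ := fun i => lam i - i
  have hℓ : StrictAnti ℓ := fun i j hij => by
    have := hlam i j hij.le
    simp only [ℓ]
    omega
  set F : (Fin (m + 1) → ℤ) → MvPolynomial (Fin (n + 1)) ℚ := fun d =>
    X (Fin.last n) ^ (∑ i, (ℓ i - d i)).toNat * rename Fin.castSucc (jacobiTrudi n (m + 1) d)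
  have hF_swap : ∀ d {i j}, i ≠ j → F (d ∘ Equiv.swap i j) = -F d := fun d i j hij => by
    simp only [F, Finset.sum_sub_distrib, Function.comp_apply, Equiv.sum_comp,
      jacobiTrudi_comp_swap _ _ _ hij, map_neg, mul_neg]
  have hF_eq : ∀ d {i j}, i ≠ j → d i = d j → F d = 0 := fun d i j hij h => by
    simp only [F, jacobiTrudi_eq_zero_of_eq _ _ _ hij h, map_zero, mul_zero]
  rw [schur_eq_jacobiTrudi, jacobiTrudi_succ_eq_sum n _ ℓ (L := -m) (by simp),
    ← Finset.sum_filter_not_add_sum_filter _ (fun d => ∃ i : Fin m, d i.castSucc ≤ ℓ i.succ),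
    sum_filter_exists_descent_eq_zero F hF_swap hF_eq hℓ, add_zero]
  exact sum_filter_not_exists_descent_eq n m lam
end

section
/- Let μ be a partition, and for r ≥ 0 let Ũ_r(μ) be the set of partitions λ ⊇ μ with λ/μ a vertical strip of size r, and D̃_r(μ) the set of partitions ν ⊆ μ with μ/ν a vertical strip of size r. Then |Ũ_k(μ)| = ∑_{s=0}^{k} |D̃_{k−s}(μ)| for every k ≥ 0. -/
/-!
Rows of `mu` of equal positive length form an interval of indices. A vertical strip added to `mu`
lengthens an initial segment of each such interval, while a strip removed from `mu` shortens a final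
segment; reversing every interval therefore matches strips added within the rows of `mu` with strips
removed from `mu`, size for size. Among the empty rows, the ones that grow are the first `s` of them
for some `s ≤ k`, and cutting them off leaves a strip of size `k - s` within the rows of `mu`.
-/

open Finset

/-- The conjugate partition, indexed from `0`: `conj mu v` is the number of rows longer than `v`
(see `lt_conj_iff`). -/
noncomputable def conj (mu : ℕ → ℕ) (v : ℕ) : ℕ := sInf {n | mu n ≤ v}

/-- The rows of length `mu i > 0` form the interval `[conj mu (mu i), conj mu (mu i - 1))`;
`blockReflect mu` reverses each of these intervals. -/
noncomputable def blockReflect (mu : ℕ → ℕ) (i : ℕ) : ℕ :=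
  conj mu (mu i) + conj mu (mu i - 1) - 1 - i

theorem conj_zero_eq_of_forall {g : ℕ → ℕ} {n : ℕ} (h : ∀ j, 0 < g j ↔ j < n) :
    conj g 0 = n := by
  refine le_antisymm (Nat.sInf_le (show g n ≤ 0 by grind)) (not_lt.mp fun hlt => ?_)
  have hmem : g (conj g 0) ≤ 0 := Nat.sInf_mem (s := {n | g n ≤ 0}) ⟨n, show g n ≤ 0 by grind⟩
  grind

section Conjugate

variable {mu : ℕ → ℕ}

theorem lt_conj_iff (hmu : Antitone mu) (h0 : ∃ n, mu n = 0) {v j : ℕ} :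
    j < conj mu v ↔ v < mu j := by
  obtain ⟨n, hn⟩ := h0
  refine ⟨fun hj => not_le.mp (Nat.notMem_of_lt_sInf (s := {n | mu n ≤ v}) hj), fun hv => ?_⟩
  by_contra! h
  have hmem : mu (conj mu v) ≤ v := Nat.sInf_mem (s := {n | mu n ≤ v}) ⟨n, show mu n ≤ v by omega⟩
  have := hmu h
  omega

theorem lt_conj_zero_iff (hmu : Antitone mu) (h0 : ∃ n, mu n = 0) {j : ℕ} :
    j < conj mu 0 ↔ mu j ≠ 0 := by
  rw [lt_conj_iff hmu h0]; omega

theorem eq_zero_of_conj_zero_le (hmu : Antitone mu) (h0 : ∃ n, mu n = 0) {j : ℕ}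
    (hj : conj mu 0 ≤ j) : mu j = 0 := by
  simpa using mt (lt_conj_zero_iff hmu h0).mpr (not_lt.mpr hj)

theorem conj_le_self (hmu : Antitone mu) (h0 : ∃ n, mu n = 0) (i : ℕ) : conj mu (mu i) ≤ i :=
  not_lt.mp fun h => ((lt_conj_iff hmu h0).mp h).false

theorem lt_conj_pred (hmu : Antitone mu) (h0 : ∃ n, mu n = 0) {i : ℕ} (hi : mu i ≠ 0) :
    i < conj mu (mu i - 1) :=
  (lt_conj_iff hmu h0).mpr (by omega)

theorem apply_blockReflect (hmu : Antitone mu) (h0 : ∃ n, mu n = 0) {i : ℕ} (hi : mu i ≠ 0) :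
    mu (blockReflect mu i) = mu i := by
  have h1 := conj_le_self hmu h0 i
  have h2 := lt_conj_pred hmu h0 hi
  have hge : ¬ blockReflect mu i < conj mu (mu i) := by unfold blockReflect; omega
  have hlt : blockReflect mu i < conj mu (mu i - 1) := by unfold blockReflect; omega
  rw [lt_conj_iff hmu h0] at hge hlt
  omega

theorem blockReflect_blockReflect (hmu : Antitone mu) (h0 : ∃ n, mu n = 0) {i : ℕ}
    (hi : mu i ≠ 0) : blockReflect mu (blockReflect mu i) = i := by
  have h1 := conj_le_self hmu h0 i
  have h2 := lt_conj_pred hmu h0 hi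
  rw [blockReflect, apply_blockReflect hmu h0 hi, blockReflect]
  omega

theorem blockReflect_le_of_le {i j : ℕ} (hij : i ≤ j) (he : mu i = mu j) :
    blockReflect mu j ≤ blockReflect mu i := by
  unfold blockReflect
  rw [he]
  omega

theorem sum_range_conj_blockReflect (hmu : Antitone mu) (h0 : ∃ n, mu n = 0) (g : ℕ → ℕ) :
    ∑ i ∈ range (conj mu 0), g (blockReflect mu i) = ∑ i ∈ range (conj mu 0), g i := by
  have hmem : ∀ i ∈ range (conj mu 0), blockReflect mu i ∈ range (conj mu 0) := by
    intro i hi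
    rw [mem_range, lt_conj_zero_iff hmu h0] at hi ⊢
    rwa [apply_blockReflect hmu h0 hi]
  have hinv : ∀ i ∈ range (conj mu 0), blockReflect mu (blockReflect mu i) = i := fun i hi =>
    blockReflect_blockReflect hmu h0 ((lt_conj_zero_iff hmu h0).mp (mem_range.mp hi))
  exact sum_nbij' _ _ hmem hmem hinv hinv fun _ _ => rfl

end Conjugate

def upStrips (mu : ℕ → ℕ) (k : ℕ) : Set (ℕ → ℕ) :=
  {lam | Antitone lam ∧ (∀ i, mu i ≤ lam i ∧ lam i ≤ mu i + 1) ∧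
    ∃ M, (∀ i, M ≤ i → lam i = mu i) ∧ ∑ i ∈ range M, (lam i - mu i) = k}

def downStrips (mu : ℕ → ℕ) (k : ℕ) : Set (ℕ → ℕ) :=
  {nu | Antitone nu ∧ (∀ i, nu i ≤ mu i ∧ mu i ≤ nu i + 1) ∧
    ∃ M, (∀ i, M ≤ i → nu i = mu i) ∧ ∑ i ∈ range M, (mu i - nu i) = k}

def sameLengthUpStrips (mu : ℕ → ℕ) (k : ℕ) : Set (ℕ → ℕ) :=
  {lam ∈ upStrips mu k | ∀ i, mu i = 0 → lam i = 0}

theorem exists_sum_range_eq_iff {f g d : ℕ → ℕ} {N k : ℕ} (hd : ∀ i, f i = g i → d i = 0)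
    (hN : ∀ i, N ≤ i → f i = g i) :
    (∃ M, (∀ i, M ≤ i → f i = g i) ∧ ∑ i ∈ range M, d i = k) ↔ ∑ i ∈ range N, d i = k := by
  refine ⟨fun ⟨M, hM, hk⟩ => ?_, fun hk => ⟨N, hN, hk⟩⟩
  have hmax : ∀ P, (∀ i, P ≤ i → f i = g i) → P ≤ max M N →
      ∑ i ∈ range (max M N), d i = ∑ i ∈ range P, d i := fun P hP hle =>
    eventually_constant_sum (fun i hi => hd i (hP i hi)) hle
  rw [← hmax N hN (le_max_right M N), hmax M hM (le_max_left M N), hk]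

theorem mem_upStrips_iff {mu lam : ℕ → ℕ} {k N : ℕ} (hN : ∀ i, N ≤ i → lam i = mu i) :
    lam ∈ upStrips mu k ↔ Antitone lam ∧ (∀ i, mu i ≤ lam i ∧ lam i ≤ mu i + 1) ∧
      ∑ i ∈ range N, (lam i - mu i) = k := by
  rw [upStrips, Set.mem_ofPred_eq, exists_sum_range_eq_iff (fun i h => by simp [h]) hN]

theorem mem_downStrips_iff {mu nu : ℕ → ℕ} {k N : ℕ} (hN : ∀ i, N ≤ i → nu i = mu i) :
    nu ∈ downStrips mu k ↔ Antitone nu ∧ (∀ i, nu i ≤ mu i ∧ mu i ≤ nu i + 1) ∧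
      ∑ i ∈ range N, (mu i - nu i) = k := by
  rw [downStrips, Set.mem_ofPred_eq, exists_sum_range_eq_iff (fun i h => by simp [h]) hN]

/-- With `j = blockReflect mu i`, so that `mu j = mu i`, the value `2 * mu i - f j` is
`mu i - (f j - mu j)` for an added strip `f` and `mu i + (mu j - f j)` for a removed one:
the same map goes both ways. -/
noncomputable def reflectStrip (mu f : ℕ → ℕ) (i : ℕ) : ℕ :=
  if mu i = 0 then 0 else 2 * mu i - f (blockReflect mu i)

section Reflection

variable {mu : ℕ → ℕ}

theorem reflectStrip_reflectStrip (hmu : Antitone mu) (h0 : ∃ n, mu n = 0) {f : ℕ → ℕ}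
    (hf : ∀ i, f i ≤ mu i + 1) (hf0 : ∀ i, mu i = 0 → f i = 0) :
    reflectStrip mu (reflectStrip mu f) = f := by
  funext i
  by_cases hi : mu i = 0
  · simp [reflectStrip, hi, hf0 i hi]
  · have := hf i
    simp only [reflectStrip, hi, if_false, apply_blockReflect hmu h0 hi,
      blockReflect_blockReflect hmu h0 hi]
    omega

theorem antitone_reflectStrip_of_up (hmu : Antitone mu) (h0 : ∃ n, mu n = 0) {lam : ℕ → ℕ}
    (hlam : Antitone lam) (hb : ∀ i, mu i ≤ lam i ∧ lam i ≤ mu i + 1) :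
    Antitone (reflectStrip mu lam) := by
  intro i j hij
  by_cases hj : mu j = 0
  · simp [reflectStrip, hj]
  have hi : mu i ≠ 0 := fun h => hj (Nat.eq_zero_of_le_zero (h ▸ hmu hij))
  have bi := hb (blockReflect mu i)
  have bj := hb (blockReflect mu j)
  rw [apply_blockReflect hmu h0 hi] at bi
  rw [apply_blockReflect hmu h0 hj] at bj
  simp only [reflectStrip, hi, hj, if_false]
  rcases (hmu hij).lt_or_eq with hlt | heq
  · omega
  · have := hlam (blockReflect_le_of_le hij heq.symm)
    omega

theorem antitone_reflectStrip_of_down (hmu : Antitone mu) (h0 : ∃ n, mu n = 0) {nu : ℕ → ℕ}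
    (hnu : Antitone nu) (hb : ∀ i, nu i ≤ mu i ∧ mu i ≤ nu i + 1) :
    Antitone (reflectStrip mu nu) := by
  intro i j hij
  by_cases hj : mu j = 0
  · simp [reflectStrip, hj]
  have hi : mu i ≠ 0 := fun h => hj (Nat.eq_zero_of_le_zero (h ▸ hmu hij))
  have bi := hb (blockReflect mu i)
  have bj := hb (blockReflect mu j)
  rw [apply_blockReflect hmu h0 hi] at bi
  rw [apply_blockReflect hmu h0 hj] at bj
  simp only [reflectStrip, hi, hj, if_false]
  rcases (hmu hij).lt_or_eq with hlt | heq
  · omega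
  · have := hnu (blockReflect_le_of_le hij heq.symm)
    omega

theorem reflectStrip_mem_downStrips (hmu : Antitone mu) (h0 : ∃ n, mu n = 0) {lam : ℕ → ℕ}
    {r : ℕ} (hlam : lam ∈ sameLengthUpStrips mu r) : reflectStrip mu lam ∈ downStrips mu r := by
  have hN : ∀ i, conj mu 0 ≤ i → mu i = 0 := fun _ => eq_zero_of_conj_zero_le hmu h0
  obtain ⟨hup, hlen⟩ := hlam
  obtain ⟨hanti, hb, hsum⟩ :=
    (mem_upStrips_iff fun i hi => by rw [hN i hi, hlen i (hN i hi)]).mp hup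
  refine (mem_downStrips_iff (N := conj mu 0) fun i hi => by simp [reflectStrip, hN i hi]).mpr
    ⟨antitone_reflectStrip_of_up hmu h0 hanti hb, fun i => ?_, ?_⟩
  · by_cases hi : mu i = 0
    · simp [reflectStrip, hi]
    · have := hb (blockReflect mu i)
      rw [apply_blockReflect hmu h0 hi] at this
      simp only [reflectStrip, hi, if_false]
      omega
  · rw [← hsum, ← sum_range_conj_blockReflect hmu h0 fun i => lam i - mu i]
    refine sum_congr rfl fun i hi => ?_
    have hi := (lt_conj_zero_iff hmu h0).mp (mem_range.mp hi)
    have := hb (blockReflect mu i)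
    rw [apply_blockReflect hmu h0 hi] at this ⊢
    simp only [reflectStrip, hi, if_false]
    omega

theorem reflectStrip_mem_sameLengthUpStrips (hmu : Antitone mu) (h0 : ∃ n, mu n = 0)
    {nu : ℕ → ℕ} {r : ℕ} (hnu : nu ∈ downStrips mu r) :
    reflectStrip mu nu ∈ sameLengthUpStrips mu r := by
  have hN : ∀ i, conj mu 0 ≤ i → mu i = 0 := fun _ => eq_zero_of_conj_zero_le hmu h0
  obtain ⟨hanti, hb, hsum⟩ := (mem_downStrips_iff fun i hi => by
    have := (hnu.2.1 i).1; rw [hN i hi] at this ⊢; omega).mp hnu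
  refine ⟨(mem_upStrips_iff (N := conj mu 0) fun i hi => by simp [reflectStrip, hN i hi]).mpr
    ⟨antitone_reflectStrip_of_down hmu h0 hanti hb, fun i => ?_, ?_⟩, fun i hi => by
      simp [reflectStrip, hi]⟩
  · by_cases hi : mu i = 0
    · simp [reflectStrip, hi]
    · have := hb (blockReflect mu i)
      rw [apply_blockReflect hmu h0 hi] at this
      simp only [reflectStrip, hi, if_false]
      omega
  · rw [← hsum, ← sum_range_conj_blockReflect hmu h0 fun i => mu i - nu i]
    refine sum_congr rfl fun i hi => ?_
    have hi := (lt_conj_zero_iff hmu h0).mp (mem_range.mp hi)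
    have := hb (blockReflect mu i)
    rw [apply_blockReflect hmu h0 hi] at this ⊢
    simp only [reflectStrip, hi, if_false]
    omega

noncomputable def sameLengthUpStripsEquivDownStrips (hmu : Antitone mu) (h0 : ∃ n, mu n = 0)
    (r : ℕ) : sameLengthUpStrips mu r ≃ downStrips mu r where
  toFun lam := ⟨reflectStrip mu lam, reflectStrip_mem_downStrips hmu h0 lam.2⟩
  invFun nu := ⟨reflectStrip mu nu, reflectStrip_mem_sameLengthUpStrips hmu h0 nu.2⟩
  left_inv lam := Subtype.ext <|
    reflectStrip_reflectStrip hmu h0 (fun i => (lam.2.1.2.1 i).2) lam.2.2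
  right_inv nu := Subtype.ext <| reflectStrip_reflectStrip hmu h0
    (fun i => (nu.2.2.1 i).1.trans (Nat.le_succ _))
    (fun i hi => Nat.eq_zero_of_le_zero (hi ▸ (nu.2.2.1 i).1))

theorem finite_downStrips (hmu : Antitone mu) (h0 : ∃ n, mu n = 0) (r : ℕ) :
    Finite (downStrips mu r) := by
  refine Finite.of_injective (β := Fin (conj mu 0) → Fin (mu 0 + 1))
    (fun nu i => ⟨nu.1 i, Nat.lt_succ_of_le (((nu.2.2.1 i).1).trans (hmu (Nat.zero_le _)))⟩) ?_
  intro nu nu' h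
  ext i
  by_cases hi : i < conj mu 0
  · simpa using congrFun h ⟨i, hi⟩
  · have h' := eq_zero_of_conj_zero_le hmu h0 (not_lt.mp hi)
    have := (nu.2.2.1 i).1
    have := (nu'.2.2.1 i).1
    omega

end Reflection

def truncate (mu lam : ℕ → ℕ) (i : ℕ) : ℕ := if mu i = 0 then 0 else lam i

noncomputable def appendRows (mu lam : ℕ → ℕ) (s i : ℕ) : ℕ :=
  if mu i = 0 then (if i < conj mu 0 + s then 1 else 0) else lam i

section NewRows

variable {mu : ℕ → ℕ}

theorem sum_appendRows (hmu : Antitone mu) (h0 : ∃ n, mu n = 0) (f : ℕ → ℕ) (s : ℕ) :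
    ∑ i ∈ range (conj mu 0 + s), (appendRows mu f s i - mu i) =
      ∑ i ∈ range (conj mu 0), (f i - mu i) + s := by
  rw [sum_range_add]
  congr 1
  · refine sum_congr rfl fun i hi => ?_
    simp [appendRows, (lt_conj_zero_iff hmu h0).mp (mem_range.mp hi)]
  · have h : ∀ x ∈ range s, appendRows mu f s (conj mu 0 + x) - mu (conj mu 0 + x) = 1 := by
      intro x hx
      simp [appendRows, eq_zero_of_conj_zero_le hmu h0 (Nat.le_add_right _ x), mem_range.mp hx]
    simp [sum_congr rfl h]

theorem appendRows_mem_upStrips (hmu : Antitone mu) (h0 : ∃ n, mu n = 0) {f : ℕ → ℕ} {r : ℕ}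
    (hf : f ∈ sameLengthUpStrips mu r) (s : ℕ) : appendRows mu f s ∈ upStrips mu (r + s) := by
  obtain ⟨hup, hlen⟩ := hf
  obtain ⟨hanti, hb, hsum⟩ := (mem_upStrips_iff fun i hi => by
    rw [eq_zero_of_conj_zero_le hmu h0 hi, hlen i (eq_zero_of_conj_zero_le hmu h0 hi)]).mp hup
  refine (mem_upStrips_iff (N := conj mu 0 + s) fun i hi => ?_).mpr ⟨?_, fun i => ?_, ?_⟩
  · simp [appendRows, eq_zero_of_conj_zero_le hmu h0 (le_of_add_le_left hi), not_lt.mpr hi]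
  · intro i j hij
    have := hmu hij
    have := hanti hij
    have := (hb i).1
    unfold appendRows
    split_ifs <;> omega
  · have := hb i
    unfold appendRows
    split_ifs <;> omega
  · rw [sum_appendRows hmu h0, hsum]

theorem conj_appendRows (hmu : Antitone mu) (h0 : ∃ n, mu n = 0) {f : ℕ → ℕ} {r : ℕ}
    (hf : f ∈ sameLengthUpStrips mu r) (s : ℕ) : conj (appendRows mu f s) 0 = conj mu 0 + s := by
  refine conj_zero_eq_of_forall fun j => ?_
  have := (hf.1.2.1 j).1
  have := (lt_conj_zero_iff hmu h0 (j := j))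
  unfold appendRows
  split_ifs <;> omega

theorem truncate_appendRows {f : ℕ → ℕ} (hf0 : ∀ i, mu i = 0 → f i = 0) (s : ℕ) :
    truncate mu (appendRows mu f s) = f := by
  funext i
  by_cases hi : mu i = 0 <;> simp [truncate, appendRows, hi, hf0]

variable {lam : ℕ → ℕ} {k : ℕ}

theorem exists_eq_zero_of_mem_upStrips (hmu : Antitone mu) (h0 : ∃ n, mu n = 0)
    (hlam : lam ∈ upStrips mu k) : ∃ n, lam n = 0 := by
  obtain ⟨-, -, M, hM, -⟩ := hlam
  obtain ⟨n, hn⟩ := h0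
  refine ⟨max M n, ?_⟩
  rw [hM _ (le_max_left M n)]
  exact Nat.eq_zero_of_le_zero (hn ▸ hmu (le_max_right M n))

theorem conj_le_conj_of_mem_upStrips (hmu : Antitone mu) (h0 : ∃ n, mu n = 0)
    (hlam : lam ∈ upStrips mu k) : conj mu 0 ≤ conj lam 0 := by
  by_contra! h
  have hmu_pos := (lt_conj_zero_iff hmu h0).mp h
  have hlam_zero := mt (lt_conj_zero_iff hlam.1 (exists_eq_zero_of_mem_upStrips hmu h0 hlam)).mpr
    (lt_irrefl _)
  have := (hlam.2.1 (conj lam 0)).1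
  omega

theorem appendRows_truncate (hmu : Antitone mu) (h0 : ∃ n, mu n = 0)
    (hlam : lam ∈ upStrips mu k) :
    appendRows mu (truncate mu lam) (conj lam 0 - conj mu 0) = lam := by
  funext i
  by_cases hi : mu i = 0
  · have := lt_conj_zero_iff hlam.1 (exists_eq_zero_of_mem_upStrips hmu h0 hlam) (j := i)
    have := hlam.2.1 i
    have := conj_le_conj_of_mem_upStrips hmu h0 hlam
    simp only [appendRows, hi, if_true]
    split_ifs <;> omega
  · simp [appendRows, truncate, hi]

theorem sum_truncate_add_conj_sub (hmu : Antitone mu) (h0 : ∃ n, mu n = 0)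
    (hlam : lam ∈ upStrips mu k) :
    ∑ i ∈ range (conj mu 0), (truncate mu lam i - mu i) + (conj lam 0 - conj mu 0) = k := by
  have hlam0 := exists_eq_zero_of_mem_upStrips hmu h0 hlam
  have hN : ∀ i, conj lam 0 ≤ i → lam i = mu i := fun i hi => by
    have := (hlam.2.1 i).1
    rw [eq_zero_of_conj_zero_le hlam.1 hlam0 hi] at this ⊢
    omega
  rw [← sum_appendRows hmu h0, appendRows_truncate hmu h0 hlam,
    Nat.add_sub_cancel' (conj_le_conj_of_mem_upStrips hmu h0 hlam)]
  exact ((mem_upStrips_iff hN).mp hlam).2.2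

theorem truncate_mem_sameLengthUpStrips (hmu : Antitone mu) (h0 : ∃ n, mu n = 0)
    (hlam : lam ∈ upStrips mu k) :
    truncate mu lam ∈ sameLengthUpStrips mu (k - (conj lam 0 - conj mu 0)) := by
  have hsum := sum_truncate_add_conj_sub hmu h0 hlam
  refine ⟨(mem_upStrips_iff (N := conj mu 0) fun i hi => ?_).mpr
    ⟨fun i j hij => ?_, fun i => ?_, ?_⟩, fun i hi => by simp [truncate, hi]⟩
  · simp [truncate, eq_zero_of_conj_zero_le hmu h0 hi]
  · have := hmu hij
    have := hlam.1 hij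
    unfold truncate
    split_ifs <;> omega
  · have := hlam.2.1 i
    unfold truncate
    split_ifs <;> omega
  · omega

end NewRows

noncomputable def upStripsEquivSigma {mu : ℕ → ℕ} (hmu : Antitone mu) (h0 : ∃ n, mu n = 0)
    (k : ℕ) : upStrips mu k ≃ Σ s : Fin (k + 1), sameLengthUpStrips mu (k - s) where
  toFun lam :=
    ⟨⟨conj lam 0 - conj mu 0, by have := sum_truncate_add_conj_sub hmu h0 lam.2; omega⟩,
      ⟨truncate mu lam, truncate_mem_sameLengthUpStrips hmu h0 lam.2⟩⟩
  invFun p := ⟨appendRows mu p.2 p.1, by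
    simpa [Nat.sub_add_cancel (Nat.lt_succ_iff.mp p.1.2)] using
      appendRows_mem_upStrips hmu h0 p.2.2 p.1⟩
  left_inv lam := Subtype.ext (appendRows_truncate hmu h0 lam.2)
  right_inv p := Sigma.subtype_ext (Fin.ext (by simp [conj_appendRows hmu h0 p.2.2]))
    (truncate_appendRows p.2.2.2 _)

/-- Let `μ` be a partition (a weakly decreasing, eventually zero sequence).  For `r ≥ 0`
let `Ũ_r(μ)` be the set of partitions `λ ⊇ μ` with `λ/μ` a vertical strip of size `r`
(`λ_i - μ_i ∈ {0,1}` for all `i`, `|λ| - |μ| = r`), and `D̃_r(μ)` the set of partitions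
`ν ⊆ μ` with `μ/ν` a vertical strip of size `r`.  Then
`|Ũ_k(μ)| = ∑_{s=0}^k |D̃_{k-s}(μ)|` for every `k ≥ 0`. -/
theorem vertical_strip_count (mu : ℕ → ℕ) (hmu : Antitone mu)
    (hfin : ∃ M, ∀ i, M ≤ i → mu i = 0) (k : ℕ) :
    Nat.card {lam : ℕ → ℕ // Antitone lam ∧
        (∀ i, mu i ≤ lam i ∧ lam i ≤ mu i + 1) ∧
        ∃ M, (∀ i, M ≤ i → lam i = mu i) ∧
          ∑ i ∈ Finset.range M, (lam i - mu i) = k} =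
      ∑ s ∈ Finset.range (k + 1),
        Nat.card {nu : ℕ → ℕ // Antitone nu ∧
          (∀ i, nu i ≤ mu i ∧ mu i ≤ nu i + 1) ∧
          ∃ M, (∀ i, M ≤ i → nu i = mu i) ∧
            ∑ i ∈ Finset.range M, (mu i - nu i) = k - s} := by
  obtain ⟨M, hM⟩ := hfin
  have h0 : ∃ n, mu n = 0 := ⟨M, hM M le_rfl⟩
  have := finite_downStrips hmu h0
  calc Nat.card (upStrips mu k)
      = Nat.card (Σ s : Fin (k + 1), downStrips mu (k - s)) :=
        Nat.card_congr <| (upStripsEquivSigma hmu h0 k).trans <|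
          Equiv.sigmaCongrRight fun _ => sameLengthUpStripsEquivDownStrips hmu h0 _
    _ = ∑ s ∈ range (k + 1), Nat.card (downStrips mu (k - s)) := by
        rw [Nat.card_sigma, Fin.sum_univ_eq_sum_range fun s => Nat.card (downStrips mu (k - s))]
end

section
/- Residue symmetry identity: let x_1, ..., x_n be distinct indeterminates and α, β parameters. Then for each 1 ≤ k < n: ∑_{I} ∏_{i∈I, j∉I} ((x_i − α x_j)(x_i − β x_j))/((x_i − x_j)(x_i − αβ x_j)) = ∑_{I} ∏_{i∈I, j∉I} ((α x_i − x_j)(β x_i − x_j))/((x_i − x_j)(αβ x_i − x_j)), where both sums range over k-element subsets I of {1,...,n}, as an identity of rational functions in x_1,...,x_n, α, β. -/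
/-- The field of rational functions in the indeterminates `x_1, …, x_n, α, β`. -/
noncomputable abbrev RatFld (n : ℕ) : Type :=
  FractionRing (MvPolynomial (Fin n ⊕ Fin 2) ℚ)

/-- The indeterminate `x_i` as a rational function. -/
noncomputable def xv (n : ℕ) (i : Fin n) : RatFld n :=
  algebraMap (MvPolynomial (Fin n ⊕ Fin 2) ℚ) (RatFld n) (MvPolynomial.X (Sum.inl i))

/-- The parameter `α` as a rational function. -/
noncomputable def pα (n : ℕ) : RatFld n :=
  algebraMap (MvPolynomial (Fin n ⊕ Fin 2) ℚ) (RatFld n) (MvPolynomial.X (Sum.inr 0))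

/-- The parameter `β` as a rational function. -/
noncomputable def pβ (n : ℕ) : RatFld n :=
  algebraMap (MvPolynomial (Fin n ⊕ Fin 2) ℚ) (RatFld n) (MvPolynomial.X (Sum.inr 1))

/-!
Write `E_k(S)` for the left-hand side, summed over the `k`-subsets of a finite set `S` of points.
Complementing the summation index turns the right-hand side into `E_{n-k}`, so the claim is
`E_p(S) = E_r(S)` whenever `p + r = #S`; this holds for points in general position in any field
and is proved by induction on `#S`.

Single out `z ∈ S` and regard `E_{k+1}(S)` as a rational function of `T = x_z`. Multiplied by
`∏_{j ≠ z} (T - x_j)(T - αβ x_j)(x_j - αβ T)` it becomes a polynomial of degree `≤ 3 (#S - 1)`,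
and it suffices to compare these polynomials for `k + 1 = p` and `k + 1 = r` at `3 (#S - 1) + 1`
points. At `T = x_j` both vanish, since the residues of the subsets `I` and `I ∪ {j}` cancel.
At `T = αβ x_j` and `T = x_j / αβ` the identity `f(αβ t, u) = f(u, t)` for the pair factor `f`
collapses both to one common factor times `E_k(S \ {z, j})`, and at `T = 0` every pair factor
becomes `1`, leaving `E_k(S \ {z}) + E_{k+1}(S \ {z})`. In each case the induction hypothesis
matches the two sides.
-/

namespace Finset

variable {ι M : Type*} [DecidableEq ι] [AddCommMonoid M] {s : Finset ι} {z : ι}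

lemma sum_powersetCard_succ_insert (hz : z ∉ s) (k : ℕ) (g : Finset ι → M) :
    ∑ I ∈ (insert z s).powersetCard (k + 1), g I =
      ∑ I ∈ s.powersetCard (k + 1), g I + ∑ J ∈ s.powersetCard k, g (insert z J) := by
  rw [powersetCard_succ_insert hz, sum_union, sum_image]
  · intro I hI J hJ hIJ
    rw [mem_coe, mem_powersetCard] at hI hJ
    rw [← erase_insert fun h => hz (hI.1 h), ← erase_insert fun h => hz (hJ.1 h), hIJ]
  · refine disjoint_right.2 fun I hI hI' => ?_
    obtain ⟨J, -, rfl⟩ := mem_image.1 hI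
    exact hz ((mem_powersetCard.1 hI').1 (mem_insert_self z J))

lemma sum_powersetCard_insert_of_mem_eq_zero (hz : z ∉ s) (k : ℕ) {g : Finset ι → M}
    (hg : ∀ I, z ∈ I → g I = 0) :
    ∑ I ∈ (insert z s).powersetCard k, g I = ∑ I ∈ s.powersetCard k, g I := by
  cases k with
  | zero => simp
  | succ k =>
    rw [sum_powersetCard_succ_insert hz, sum_eq_zero fun J _ => hg _ (mem_insert_self z J),
      add_zero]

lemma sum_powersetCard_succ_insert_of_notMem_eq_zero (hz : z ∉ s) (k : ℕ) {g : Finset ι → M}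
    (hg : ∀ I ⊆ insert z s, z ∉ I → g I = 0) :
    ∑ I ∈ (insert z s).powersetCard (k + 1), g I = ∑ J ∈ s.powersetCard k, g (insert z J) := by
  rw [sum_powersetCard_succ_insert hz, sum_eq_zero fun I hI => ?_, zero_add]
  have hIs := (mem_powersetCard.1 hI).1
  exact hg I (hIs.trans (subset_insert z s)) fun h => hz (hIs h)

lemma sum_powersetCard_univ_compl {α : Type*} [Fintype α] [DecidableEq α]
    {k : ℕ} (hk : k ≤ Fintype.card α) (f : Finset α → M) :
    ∑ I ∈ univ.powersetCard k, f Iᶜ = ∑ J ∈ univ.powersetCard (Fintype.card α - k), f J :=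
  sum_nbij' compl compl (fun I hI => by simp_all [card_compl])
    (fun J hJ => by simp_all [card_compl]; omega) (fun I _ => compl_compl I)
    (fun J _ => compl_compl J) fun _ _ => rfl

end Finset

namespace Polynomial

lemma natDegree_prod_le_mul_card {R ι : Type*} [CommSemiring R] {s : Finset ι}
    {p : ι → R[X]} {d : ℕ} (hp : ∀ j ∈ s, (p j).natDegree ≤ d) :
    (∏ j ∈ s, p j).natDegree ≤ d * s.card :=
  (natDegree_prod_le s p).trans <|
    (Finset.sum_le_card_nsmul _ _ _ hp).trans_eq (by rw [smul_eq_mul, mul_comm])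

end Polynomial

namespace ResidueSymmetry

open Finset Polynomial

section PairFactor

variable {F : Type*} [Field F] {ι : Type*} {a b : F} {x : ι → F}

def pairFactor (a b u v : F) : F := (u - a * v) * (u - b * v) / ((u - v) * (u - a * b * v))

def crossProd (a b : F) (x : ι → F) (I J : Finset ι) : F :=
  ∏ i ∈ I, ∏ j ∈ J, pairFactor a b (x i) (x j)

def subsetSum [DecidableEq ι] (a b : F) (x : ι → F) (S : Finset ι) (k : ℕ) : F :=
  ∑ I ∈ S.powersetCard k, crossProd a b x I (S \ I)

lemma pairFactor_mul_left {t u : F} (hab : a * b ≠ 0) (hut : u ≠ t) (hu : u ≠ a * b * t) :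
    pairFactor a b (a * b * t) u = pairFactor a b u t := by
  have h₁ : a * b * t - u ≠ 0 := sub_ne_zero.2 (Ne.symm hu)
  have h₂ : a * b * t - a * b * u ≠ 0 := by
    rw [← mul_sub]; exact mul_ne_zero hab (sub_ne_zero.2 (Ne.symm hut))
  rw [pairFactor, pairFactor, div_eq_div_iff (mul_ne_zero h₁ h₂)
    (mul_ne_zero (sub_ne_zero.2 hut) (sub_ne_zero.2 hu))]
  ring

variable [DecidableEq ι]

lemma crossProd_insert_left {I J : Finset ι} {i : ι} (h : i ∉ I) :
    crossProd a b x (insert i I) J =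
      (∏ j ∈ J, pairFactor a b (x i) (x j)) * crossProd a b x I J :=
  prod_insert h

lemma crossProd_insert_right {I J : Finset ι} {j : ι} (h : j ∉ J) :
    crossProd a b x I (insert j J) =
      (∏ i ∈ I, pairFactor a b (x i) (x j)) * crossProd a b x I J := by
  simp only [crossProd, prod_insert h, prod_mul_distrib]

@[simp] lemma subsetSum_zero (S : Finset ι) : subsetSum a b x S 0 = 1 := by
  simp [subsetSum, crossProd]

@[simp] lemma subsetSum_card (S : Finset ι) : subsetSum a b x S S.card = 1 := by
  simp [subsetSum, crossProd]

end PairFactor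

section Cleared

variable {R : Type*} [CommRing R] {ι : Type*} [DecidableEq ι]

-- `denom a b t v` is a common multiple of the denominators of `pairFactor a b t v` and
-- `pairFactor a b v t`; `numer` and `numerSwap` are the matching numerators.
def denom (a b t v : R) : R := (t - v) * (t - a * b * v) * (v - a * b * t)

def numer (a b t v : R) : R := (t - a * v) * (t - b * v) * (v - a * b * t)

def numerSwap (a b t u : R) : R := (u - a * t) * (u - b * t) * (a * b * u - t)

/-- `clearedSum a b x w s k t` is `subsetSum a b x (insert z s) (k + 1)` with `x z = t` and
`w J = crossProd a b x J (s \ J)`, multiplied by `∏ j ∈ s, denom a b t (x j)`: the first sum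
collects the subsets containing `z`, the second those avoiding it. -/
def clearedSum (a b : R) (x : ι → R) (w : Finset ι → R) (s : Finset ι) (k : ℕ) (t : R) : R :=
  (∑ J ∈ s.powersetCard k,
      w J * (∏ j ∈ J, denom a b t (x j)) * ∏ j ∈ s \ J, numer a b t (x j)) +
    ∑ J ∈ s.powersetCard (k + 1),
      w J * (∏ j ∈ J, numerSwap a b t (x j)) * ∏ j ∈ s \ J, denom a b t (x j)

lemma map_clearedSum {S : Type*} [CommRing S] (φ : R →+* S) (a b : R) (x : ι → R)
    (w : Finset ι → R) (s : Finset ι) (k : ℕ) (t : R) :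
    φ (clearedSum a b x w s k t) = clearedSum (φ a) (φ b) (φ ∘ x) (φ ∘ w) s k (φ t) := by
  simp [clearedSum, denom, numer, numerSwap, map_sum, map_prod]

lemma natDegree_clearedSum_le (a b : R) (x : ι → R) (w : Finset ι → R) (s : Finset ι) (k : ℕ) :
    (clearedSum (C a) (C b) (C ∘ x) (C ∘ w) s k X).natDegree ≤ 3 * s.card := by
  have hterm : ∀ J ⊆ s, ∀ p q : ι → R[X], (∀ j, (p j).natDegree ≤ 3) →
      (∀ j, (q j).natDegree ≤ 3) →
      ((C ∘ w) J * (∏ j ∈ J, p j) * ∏ j ∈ s \ J, q j).natDegree ≤ 3 * s.card := by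
    intro J hJ p q hp hq
    refine natDegree_mul_le.trans ?_
    grw [natDegree_mul_le, Function.comp_apply, natDegree_C,
      natDegree_prod_le_mul_card fun j _ => hp j,
      natDegree_prod_le_mul_card fun j _ => hq j, card_sdiff_of_subset hJ]
    have := card_le_card hJ
    omega
  have hden (v : R) : (denom (C a) (C b) X (C v)).natDegree ≤ 3 := by
    unfold denom; compute_degree
  have hnum (v : R) : (numer (C a) (C b) X (C v)).natDegree ≤ 3 := by
    unfold numer; compute_degree
  have hswap (v : R) : (numerSwap (C a) (C b) X (C v)).natDegree ≤ 3 := by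
    unfold numerSwap; compute_degree
  rw [clearedSum]
  refine natDegree_add_le_of_degree_le ?_ ?_ <;> refine natDegree_sum_le_of_forall_le _ _ ?_
  · exact fun J hJ => hterm J (mem_powersetCard.1 hJ).1 _ _ (fun j => hden _) (fun j => hnum _)
  · exact fun J hJ => hterm J (mem_powersetCard.1 hJ).1 _ _ (fun j => hswap _) (fun j => hden _)

end Cleared

section Generic

variable {F : Type*} [Field F] {ι : Type*} {c : F} {x : ι → F} {s : Finset ι}

-- Equivalently, the points `c ^ e * x i` (`e = -1, 0, 1`, `i ∈ s`) and `0` are pairwise distinct.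
-- With `c = a * b` they are the interpolation nodes, and all pair factors among the `x i` are
-- defined.
structure IsGeneric (c : F) (x : ι → F) (s : Finset ι) : Prop where
  ne_zero : c ≠ 0
  injOn : Set.InjOn x s
  ne_mul : ∀ i ∈ s, ∀ j ∈ s, x i ≠ c * x j
  ne_sq_mul : ∀ i ∈ s, ∀ j ∈ s, x i ≠ c ^ 2 * x j
  apply_ne_zero : ∀ i ∈ s, x i ≠ 0

lemma IsGeneric.mono {t : Finset ι} (h : IsGeneric c x s) (hts : t ⊆ s) :
    IsGeneric c x t :=
  ⟨h.ne_zero, h.injOn.mono (coe_subset.2 hts), fun i hi j hj => h.ne_mul i (hts hi) j (hts hj),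
    fun i hi j hj => h.ne_sq_mul i (hts hi) j (hts hj), fun i hi => h.apply_ne_zero i (hts hi)⟩

lemma IsGeneric.apply_ne {i j : ι} (h : IsGeneric c x s) (hi : i ∈ s)
    (hj : j ∈ s) (hij : i ≠ j) : x i ≠ x j :=
  fun e => hij (h.injOn hi hj e)

lemma IsGeneric.injOn_zpow_mul (h : IsGeneric c x s) :
    Set.InjOn (fun p : ℤ × ι => c ^ p.1 * x p.2) ↑(Icc (-1 : ℤ) 1 ×ˢ s) := by
  rintro ⟨e, i⟩ hi ⟨e', j⟩ hj heq
  simp only [coe_product, coe_Icc, Set.mem_prod, Set.mem_Icc, mem_coe] at hi hj heq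
  obtain ⟨⟨he₁, he₂⟩, hi⟩ := hi
  obtain ⟨⟨he₁', he₂'⟩, hj⟩ := hj
  have hc := h.ne_zero
  interval_cases e <;> interval_cases e' <;>
    simp only [zpow_neg, zpow_one, zpow_zero, one_mul] at heq
  all_goals first
    | exact Prod.ext rfl (h.injOn hi hj (mul_left_cancel₀ (inv_ne_zero hc) heq))
    | exact Prod.ext rfl (h.injOn hi hj heq)
    | exact Prod.ext rfl (h.injOn hi hj (mul_left_cancel₀ hc heq))
    | field_simp at heq
  all_goals first
    | exact absurd heq (h.ne_mul i hi j hj)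
    | exact absurd heq.symm (h.ne_mul j hj i hi)
    | exact absurd (by linear_combination heq) (h.ne_sq_mul i hi j hj)
    | exact absurd (by linear_combination heq.symm) (h.ne_sq_mul j hj i hi)
    | exact absurd (by linear_combination heq) (h.ne_mul i hi j hj)
    | exact absurd (by linear_combination heq.symm) (h.ne_mul j hj i hi)

lemma IsGeneric.card_insert_zero_image_zpow_mul [DecidableEq F] (h : IsGeneric c x s) :
    (insert 0 ((Icc (-1 : ℤ) 1 ×ˢ s).image fun p : ℤ × ι => c ^ p.1 * x p.2)).card =
      3 * s.card + 1 := by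
  rw [card_insert_of_notMem, card_image_of_injOn h.injOn_zpow_mul, card_product, Int.card_Icc]
  · rfl
  · simp only [mem_image, mem_product, not_exists, not_and]
    rintro ⟨e, i⟩ ⟨-, hi⟩ h0
    exact h.apply_ne_zero i hi ((mul_eq_zero.1 h0).resolve_left (zpow_ne_zero e h.ne_zero))

end Generic

section Evaluation

variable {F : Type*} [Field F] {ι : Type*} {a b : F} {x : ι → F}

lemma pairFactor_mul_denom {t v : F} (htv : t ≠ v) (ht : t ≠ a * b * v) :
    pairFactor a b t v * denom a b t v = numer a b t v := by
  rw [pairFactor, denom, numer, div_mul_eq_mul_div,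
    div_eq_iff (mul_ne_zero (sub_ne_zero.2 htv) (sub_ne_zero.2 ht))]
  ring

lemma pairFactor_mul_denom_swap {t u : F} (hut : u ≠ t) (hu : u ≠ a * b * t) :
    pairFactor a b u t * denom a b t u = numerSwap a b t u := by
  rw [pairFactor, denom, numerSwap, div_mul_eq_mul_div,
    div_eq_iff (mul_ne_zero (sub_ne_zero.2 hut) (sub_ne_zero.2 hu))]
  ring

lemma prod_pairFactor_mul_denom {J : Finset ι} {t : F}
    (h : ∀ j ∈ J, t ≠ x j ∧ t ≠ a * b * x j) :
    (∏ j ∈ J, pairFactor a b t (x j)) * ∏ j ∈ J, denom a b t (x j) =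
      ∏ j ∈ J, numer a b t (x j) := by
  rw [← prod_mul_distrib]
  exact prod_congr rfl fun j hj => pairFactor_mul_denom (h j hj).1 (h j hj).2

lemma prod_pairFactor_mul_denom_swap {J : Finset ι} {t : F}
    (h : ∀ j ∈ J, x j ≠ t ∧ x j ≠ a * b * t) :
    (∏ j ∈ J, pairFactor a b (x j) t) * ∏ j ∈ J, denom a b t (x j) =
      ∏ j ∈ J, numerSwap a b t (x j) := by
  rw [← prod_mul_distrib]
  exact prod_congr rfl fun j hj => pairFactor_mul_denom_swap (h j hj).1 (h j hj).2

lemma IsGeneric.denom_ne_zero {s : Finset ι} {i j : ι} (hx : IsGeneric (a * b) x s) (hi : i ∈ s)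
    (hj : j ∈ s) (hij : i ≠ j) : denom a b (x i) (x j) ≠ 0 :=
  mul_ne_zero
    (mul_ne_zero (sub_ne_zero.2 (hx.apply_ne hi hj hij)) (sub_ne_zero.2 (hx.ne_mul i hi j hj)))
    (sub_ne_zero.2 (hx.ne_mul j hj i hi))

variable [DecidableEq ι]

noncomputable def clearedPoly (a b : F) (x : ι → F) (s : Finset ι) (k : ℕ) : F[X] :=
  clearedSum (C a) (C b) (C ∘ x) (C ∘ fun J => crossProd a b x J (s \ J)) s k X

lemma eval_clearedPoly (s : Finset ι) (k : ℕ) (t : F) :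
    (clearedPoly a b x s k).eval t =
      clearedSum a b x (fun J => crossProd a b x J (s \ J)) s k t := by
  rw [clearedPoly, ← coe_evalRingHom, map_clearedSum]
  simp [Function.comp_def]

lemma IsGeneric.prod_pairFactor_mul_denom_of_notMem {s J : Finset ι} {z : ι}
    (hx : IsGeneric (a * b) x (insert z s)) (hz : z ∉ s) (hJ : J ⊆ s) :
    (∏ j ∈ J, pairFactor a b (x z) (x j)) * ∏ j ∈ J, denom a b (x z) (x j) =
        ∏ j ∈ J, numer a b (x z) (x j) ∧
      (∏ j ∈ J, pairFactor a b (x j) (x z)) * ∏ j ∈ J, denom a b (x z) (x j) =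
        ∏ j ∈ J, numerSwap a b (x z) (x j) := by
  have hzs : z ∈ insert z s := mem_insert_self z s
  have hs {j} (hj : j ∈ J) : j ∈ insert z s := mem_insert_of_mem (hJ hj)
  have hne {j} (hj : j ∈ J) : z ≠ j := fun h => hz (hJ (h ▸ hj))
  exact ⟨prod_pairFactor_mul_denom fun j hj =>
      ⟨hx.apply_ne hzs (hs hj) (hne hj), hx.ne_mul _ hzs _ (hs hj)⟩,
    prod_pairFactor_mul_denom_swap fun j hj =>
      ⟨hx.apply_ne (hs hj) hzs (hne hj).symm, hx.ne_mul _ (hs hj) _ hzs⟩⟩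

lemma eval_clearedPoly_zero (s : Finset ι) (k : ℕ) :
    (clearedPoly a b x s k).eval 0 =
      (∏ j ∈ s, a * b * x j ^ 3) * (subsetSum a b x s k + subsetSum a b x s (k + 1)) := by
  have hzero (v : F) : denom a b 0 v = a * b * v ^ 3 ∧ numer a b 0 v = a * b * v ^ 3 ∧
      numerSwap a b 0 v = a * b * v ^ 3 := by
    refine ⟨?_, ?_, ?_⟩ <;> simp only [denom, numer, numerSwap] <;> ring
  have hterm (n : ℕ) (J) (hJ : J ∈ s.powersetCard n) :
      crossProd a b x J (s \ J) * (∏ j ∈ J, a * b * x j ^ 3) * ∏ j ∈ s \ J, a * b * x j ^ 3 =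
        (∏ j ∈ s, a * b * x j ^ 3) * crossProd a b x J (s \ J) := by
    rw [← prod_sdiff (mem_powersetCard.1 hJ).1]
    ring
  simp only [eval_clearedPoly, clearedSum, subsetSum, mul_add, mul_sum, hzero]
  exact congrArg₂ _ (sum_congr rfl (hterm k)) (sum_congr rfl (hterm (k + 1)))

lemma eval_clearedPoly_of_notMem {s : Finset ι} {z : ι} (hz : z ∉ s)
    (hx : IsGeneric (a * b) x (insert z s)) (k : ℕ) :
    (clearedPoly a b x s k).eval (x z) =
      (∏ j ∈ s, denom a b (x z) (x j)) * subsetSum a b x (insert z s) (k + 1) := by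
  rw [eval_clearedPoly, clearedSum, subsetSum, sum_powersetCard_succ_insert hz, mul_add, mul_sum,
    mul_sum, add_comm]
  congr 1 <;> refine sum_congr rfl fun J hJ => ?_ <;> have hJs := (mem_powersetCard.1 hJ).1
  · rw [insert_sdiff_of_notMem _ fun h => hz (hJs h),
      crossProd_insert_right fun h => hz (mem_sdiff.1 h).1, ← prod_sdiff hJs,
      ← (hx.prod_pairFactor_mul_denom_of_notMem hz hJs).2]
    ring
  · rw [insert_sdiff_insert, sdiff_insert_of_notMem hz, crossProd_insert_left fun h => hz (hJs h),
      ← prod_sdiff hJs, ← (hx.prod_pairFactor_mul_denom_of_notMem hz sdiff_subset).1]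
    ring

lemma eval_clearedPoly_insert_self {w : Finset ι} {m : ι} (hm : m ∉ w)
    (hx : IsGeneric (a * b) x (insert m w)) (k : ℕ) :
    (clearedPoly a b x (insert m w) k).eval (x m) = 0 := by
  have hdenom : denom a b (x m) (x m) = 0 := by simp [denom]
  rw [eval_clearedPoly, clearedSum,
    sum_powersetCard_insert_of_mem_eq_zero hm k fun J hJ => by rw [prod_eq_zero hJ hdenom]; ring,
    sum_powersetCard_succ_insert_of_notMem_eq_zero hm k fun J hJ hmJ => by
      rw [prod_eq_zero (mem_sdiff.2 ⟨mem_insert_self m w, hmJ⟩) hdenom]; ring,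
    ← sum_add_distrib]
  refine sum_eq_zero fun J hJ => ?_
  have hJw := (mem_powersetCard.1 hJ).1
  have hmJ : m ∉ J := fun h => hm (hJw h)
  have hmwJ : m ∉ w \ J := fun h => hm (mem_sdiff.1 h).1
  -- the terms for `J` and `insert m J` differ only in this factor, so their residues cancel
  have hself : numer a b (x m) (x m) + numerSwap a b (x m) (x m) = 0 := by
    simp only [numer, numerSwap]; ring
  obtain ⟨hnumer, -⟩ := hx.prod_pairFactor_mul_denom_of_notMem hm (sdiff_subset (s := w) (t := J))
  obtain ⟨-, hswap⟩ := hx.prod_pairFactor_mul_denom_of_notMem hm hJw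
  rw [insert_sdiff_of_notMem _ hmJ, insert_sdiff_insert, sdiff_insert_of_notMem hm,
    crossProd_insert_right hmwJ, crossProd_insert_left hmJ, prod_insert hmwJ, prod_insert hmJ,
    ← hnumer, ← hswap]
  linear_combination (crossProd a b x J (w \ J) * (∏ j ∈ J, pairFactor a b (x j) (x m)) *
    (∏ j ∈ J, denom a b (x m) (x j)) * (∏ j ∈ w \ J, pairFactor a b (x m) (x j)) *
    ∏ j ∈ w \ J, denom a b (x m) (x j)) * hself

lemma eval_clearedPoly_insert_mul_self {w : Finset ι} {m : ι} (hm : m ∉ w)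
    (hx : IsGeneric (a * b) x (insert m w)) (k : ℕ) :
    (clearedPoly a b x (insert m w) k).eval (a * b * x m) =
      numer a b (a * b * x m) (x m) *
        (∏ j ∈ w, pairFactor a b (x j) (x m) * denom a b (a * b * x m) (x j)) *
          subsetSum a b x w k := by
  have hdenom : denom a b (a * b * x m) (x m) = 0 := by simp [denom]
  have hswap : numerSwap a b (a * b * x m) (x m) = 0 := by simp [numerSwap]
  have hnumer : ∀ j ∈ w, numer a b (a * b * x m) (x j) =
      pairFactor a b (x j) (x m) * denom a b (a * b * x m) (x j) := fun j hj => by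
    have hjm : j ≠ m := fun h => hm (h ▸ hj)
    have hj' : j ∈ insert m w := mem_insert_of_mem hj
    have hm' := mem_insert_self m w
    rw [← pairFactor_mul_left hx.ne_zero (hx.apply_ne hj' hm' hjm) (hx.ne_mul j hj' m hm'),
      pairFactor_mul_denom (hx.ne_mul j hj' m hm').symm
        fun h => hx.apply_ne hm' hj' hjm.symm (mul_left_cancel₀ hx.ne_zero h)]
  rw [eval_clearedPoly, clearedSum,
    sum_eq_zero (s := (insert m w).powersetCard (k + 1)) fun J hJ => ?_, add_zero,
    sum_powersetCard_insert_of_mem_eq_zero hm k fun J hJ => by rw [prod_eq_zero hJ hdenom]; ring,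
    subsetSum, mul_sum]
  · refine sum_congr rfl fun J hJ => ?_
    have hJw := (mem_powersetCard.1 hJ).1
    have hmwJ : m ∉ w \ J := fun h => hm (mem_sdiff.1 h).1
    rw [insert_sdiff_of_notMem _ fun h => hm (hJw h), crossProd_insert_right hmwJ,
      prod_insert hmwJ, prod_congr rfl fun j hj => hnumer j (mem_sdiff.1 hj).1, ← prod_sdiff hJw]
    simp only [prod_mul_distrib]
    ring
  · by_cases hmJ : m ∈ J
    · rw [prod_eq_zero hmJ hswap]; ring
    · rw [prod_eq_zero (mem_sdiff.2 ⟨mem_insert_self m w, hmJ⟩) hdenom]; ring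

lemma eval_clearedPoly_insert_of_mul_eq {w : Finset ι} {m : ι} (hm : m ∉ w)
    (hx : IsGeneric (a * b) x (insert m w)) {t : F} (ht : a * b * t = x m) (k : ℕ) :
    (clearedPoly a b x (insert m w) k).eval t =
      numerSwap a b t (x m) * (∏ j ∈ w, pairFactor a b (x m) (x j) * denom a b t (x j)) *
        subsetSum a b x w k := by
  have hdenom : denom a b t (x m) = 0 := by simp [denom, ht]
  have hnumer : numer a b t (x m) = 0 := by simp [numer, ht]
  have hswap : ∀ j ∈ w,
      numerSwap a b t (x j) = pairFactor a b (x m) (x j) * denom a b t (x j) := fun j hj => by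
    have hjm : j ≠ m := fun h => hm (h ▸ hj)
    have hj' : j ∈ insert m w := mem_insert_of_mem hj
    have hm' := mem_insert_self m w
    have hjt : x j ≠ t := fun h => hx.ne_mul m hm' j hj' (by rw [← ht, h])
    have hjmt : x j ≠ a * b * t := ht ▸ hx.apply_ne hj' hm' hjm
    rw [← ht, pairFactor_mul_left hx.ne_zero hjt hjmt, pairFactor_mul_denom_swap hjt hjmt]
  rw [eval_clearedPoly, clearedSum,
    sum_eq_zero (s := (insert m w).powersetCard k) fun J hJ => ?_, zero_add,
    sum_powersetCard_succ_insert_of_notMem_eq_zero hm k fun J _ hmJ => by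
      rw [prod_eq_zero (mem_sdiff.2 ⟨mem_insert_self m w, hmJ⟩) hdenom]; ring,
    subsetSum, mul_sum]
  · refine sum_congr rfl fun J hJ => ?_
    have hJw := (mem_powersetCard.1 hJ).1
    have hmJ : m ∉ J := fun h => hm (hJw h)
    rw [insert_sdiff_insert, sdiff_insert_of_notMem hm, crossProd_insert_left hmJ,
      prod_insert hmJ, prod_congr rfl fun j hj => hswap j (hJw hj), ← prod_sdiff hJw]
    simp only [prod_mul_distrib]
    ring
  · by_cases hmJ : m ∈ J
    · rw [prod_eq_zero hmJ hdenom]; ring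
    · rw [prod_eq_zero (mem_sdiff.2 ⟨mem_insert_self m w, hmJ⟩) hnumer]; ring

lemma clearedPoly_eq_of_forall_subset {s : Finset ι} (hx : IsGeneric (a * b) x s)
    (ih : ∀ t ⊆ s, ∀ p r, p + r = t.card → subsetSum a b x t p = subsetSum a b x t r)
    {p r : ℕ} (hpr : p + r + 1 = s.card) : clearedPoly a b x s p = clearedPoly a b x s r := by
  classical
  refine eq_of_degree_sub_lt_of_eval_finset_eq
    (insert 0 ((Icc (-1 : ℤ) 1 ×ˢ s).image fun p : ℤ × ι => (a * b) ^ p.1 * x p.2)) ?_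
    fun t ht => ?_
  · rw [hx.card_insert_zero_image_zpow_mul]
    refine degree_le_natDegree.trans_lt (WithBot.coe_lt_coe.2 ?_)
    exact (natDegree_sub_le _ _).trans_lt <| Nat.lt_succ_of_le <|
      max_le (natDegree_clearedSum_le ..) (natDegree_clearedSum_le ..)
  rcases mem_insert.1 ht with rfl | ht
  · rw [eval_clearedPoly_zero, eval_clearedPoly_zero, ih s subset_rfl p (r + 1) (by omega),
      ih s subset_rfl (p + 1) r (by omega), add_comm]
  obtain ⟨⟨e, m⟩, he, rfl⟩ := mem_image.1 ht
  obtain ⟨he, hm⟩ := mem_product.1 he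
  obtain ⟨he₁, he₂⟩ := mem_Icc.1 he
  have hsm : insert m (s.erase m) = s := insert_erase hm
  have hx' : IsGeneric (a * b) x (insert m (s.erase m)) := by rwa [hsm]
  have hsymm : subsetSum a b x (s.erase m) p = subsetSum a b x (s.erase m) r :=
    ih _ (erase_subset m s) p r (by rw [card_erase_of_mem hm]; omega)
  have hm' := notMem_erase m s
  rw [← hsm]
  interval_cases e
  · have ht : a * b * ((a * b) ^ (-1 : ℤ) * x m) = x m := by
      rw [zpow_neg_one, ← mul_assoc, mul_inv_cancel₀ hx.ne_zero, one_mul]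
    rw [eval_clearedPoly_insert_of_mul_eq hm' hx' ht,
      eval_clearedPoly_insert_of_mul_eq hm' hx' ht, hsymm]
  · rw [zpow_zero, one_mul, eval_clearedPoly_insert_self hm' hx',
      eval_clearedPoly_insert_self hm' hx']
  · rw [zpow_one, eval_clearedPoly_insert_mul_self hm' hx',
      eval_clearedPoly_insert_mul_self hm' hx', hsymm]

theorem subsetSum_eq_of_add_eq_card {S : Finset ι} (hx : IsGeneric (a * b) x S) {p r : ℕ}
    (h : p + r = S.card) : subsetSum a b x S p = subsetSum a b x S r := by
  induction S using Finset.strongInduction generalizing p r with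
  | H S ih =>
  rcases p with _ | p
  · rw [zero_add] at h; rw [h, subsetSum_zero, subsetSum_card]
  rcases r with _ | r
  · rw [add_zero] at h; rw [h, subsetSum_zero, subsetSum_card]
  obtain ⟨z, hz⟩ : S.Nonempty := card_pos.1 (by omega)
  have hS : insert z (S.erase z) = S := insert_erase hz
  have hzs := notMem_erase z S
  have hx' : IsGeneric (a * b) x (insert z (S.erase z)) := by rwa [hS]
  have hpoly : clearedPoly a b x (S.erase z) p = clearedPoly a b x (S.erase z) r :=
    clearedPoly_eq_of_forall_subset (hx.mono (erase_subset z S))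
      (fun t ht p r => ih t (ht.trans_ssubset (erase_ssubset hz))
        (hx.mono (ht.trans (erase_subset z S))))
      (by rw [card_erase_of_mem hz]; omega)
  have hD : ∏ j ∈ S.erase z, denom a b (x z) (x j) ≠ 0 := prod_ne_zero_iff.2 fun j hj =>
    hx.denom_ne_zero hz (mem_of_mem_erase hj) (ne_of_mem_erase hj).symm
  have := congrArg (eval (x z)) hpoly
  rwa [eval_clearedPoly_of_notMem hzs hx', eval_clearedPoly_of_notMem hzs hx', hS,
    mul_right_inj' hD] at this

end Evaluation

section RationalFunctions

lemma algebraMap_ne_of_eval_ne {n : ℕ} {p q : MvPolynomial (Fin n ⊕ Fin 2) ℚ}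
    (v : Fin n ⊕ Fin 2 → ℚ) (h : MvPolynomial.eval v p ≠ MvPolynomial.eval v q) :
    algebraMap _ (RatFld n) p ≠ algebraMap _ (RatFld n) q :=
  fun hpq => h (congrArg (MvPolynomial.eval v) (IsFractionRing.injective _ _ hpq))

lemma isGeneric_xv (n : ℕ) : IsGeneric (pα n * pβ n) (xv n) univ := by
  have h0 := map_zero (algebraMap (MvPolynomial (Fin n ⊕ Fin 2) ℚ) (RatFld n))
  refine ⟨?_, fun i _ j _ h => ?_, fun i _ j _ => ?_, fun i _ j _ => ?_, fun i _ => ?_⟩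
  · rw [pα, pβ, ← map_mul, ← h0]
    exact algebraMap_ne_of_eval_ne (fun _ => 1) (by simp)
  · simpa [xv] using IsFractionRing.injective _ (RatFld n) h
  · rw [xv, xv, pα, pβ, ← map_mul, ← map_mul]
    exact algebraMap_ne_of_eval_ne (Pi.single (Sum.inl i) 1) (by simp)
  · rw [xv, xv, pα, pβ, ← map_mul, ← map_pow, ← map_mul]
    exact algebraMap_ne_of_eval_ne (Pi.single (Sum.inl i) 1) (by simp)
  · rw [xv, ← h0]
    exact algebraMap_ne_of_eval_ne (fun _ => 1) (by simp)

end RationalFunctions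

end ResidueSymmetry

theorem residue_symmetry_general (n k : ℕ) (hkn : k < n) :
    ∑ I ∈ Finset.powersetCard k (Finset.univ : Finset (Fin n)),
      ∏ i ∈ I, ∏ j ∈ Iᶜ,
        ((xv n i - pα n * xv n j) * (xv n i - pβ n * xv n j)) /
          ((xv n i - xv n j) * (xv n i - pα n * pβ n * xv n j)) =
    ∑ I ∈ Finset.powersetCard k (Finset.univ : Finset (Fin n)),
      ∏ i ∈ I, ∏ j ∈ Iᶜ,
        ((pα n * xv n i - xv n j) * (pβ n * xv n i - xv n j)) /
          ((xv n i - xv n j) * (pα n * pβ n * xv n i - xv n j)) := by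
  open ResidueSymmetry Finset in
  have hswap (I : Finset (Fin n)) : (∏ i ∈ I, ∏ j ∈ Iᶜ,
      ((pα n * xv n i - xv n j) * (pβ n * xv n i - xv n j)) /
        ((xv n i - xv n j) * (pα n * pβ n * xv n i - xv n j))) =
      crossProd (pα n) (pβ n) (xv n) Iᶜ (univ \ Iᶜ) := by
    rw [crossProd, prod_comm, ← compl_eq_univ_sdiff, compl_compl]
    refine prod_congr rfl fun i _ => prod_congr rfl fun j _ => ?_
    rw [pairFactor]
    congr 1 <;> ring
  rw [sum_congr rfl fun I _ => hswap I, sum_powersetCard_univ_compl (f := fun J =>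
    crossProd (pα n) (pβ n) (xv n) J (univ \ J)) (by simpa using hkn.le)]
  simp only [← compl_eq_univ_sdiff]
  exact subsetSum_eq_of_add_eq_card (isGeneric_xv n) (by simp; omega)

/-- Residue symmetry identity: for distinct indeterminates `x_1, …, x_n` and parameters
`α, β`, and for each `1 ≤ k < n`,
`∑_I ∏_{i∈I, j∉I} ((x_i - αx_j)(x_i - βx_j))/((x_i - x_j)(x_i - αβx_j))
 = ∑_I ∏_{i∈I, j∉I} ((αx_i - x_j)(βx_i - x_j))/((x_i - x_j)(αβx_i - x_j))`,
both sums over `k`-element subsets `I ⊆ {1, …, n}`, as an identity of rational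
functions. -/
theorem residue_symmetry (n k : ℕ) (hk1 : 1 ≤ k) (hkn : k < n) :
    ∑ I ∈ Finset.powersetCard k (Finset.univ : Finset (Fin n)),
      ∏ i ∈ I, ∏ j ∈ Iᶜ,
        ((xv n i - pα n * xv n j) * (xv n i - pβ n * xv n j)) /
          ((xv n i - xv n j) * (xv n i - pα n * pβ n * xv n j)) =
    ∑ I ∈ Finset.powersetCard k (Finset.univ : Finset (Fin n)),
      ∏ i ∈ I, ∏ j ∈ Iᶜ,
        ((pα n * xv n i - xv n j) * (pβ n * xv n i - xv n j)) /
          ((xv n i - xv n j) * (pα n * pβ n * xv n i - xv n j)) :=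
  residue_symmetry_general n k hkn
end
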